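/- Let R̂ = Z[q^{±1}][x_1,x_2] and define, for n ≥ 1, U_n = G_n + x_1·x_2·G_{n-1} - G_{n-2} + (x_1² + x_2²)·Q_{n-1} + 2·x_1·x_2·Q_{n-2}, where Q_n = (1/2)·Σ_{k=0}^{n} G_{n-2k-1} and G_k = {k+1}·S_k(y) + (-1)^{k+1}·{1}·S_k(x_1)·S_k(x_2) for all integers k. Then deg_y(U_n - G_n) ≤ n-1; consequently the R̂-span of {U_n : n ≥ 1} equals the R̂-span of {G_n : n ≥ 1}. -/

import Mathlib

open Polynomial

/-- Chebyshev polynomials of the second kind (nonnegative index):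
`S 0 = 1`, `S 1 = X`, `S (n+2) = X * S (n+1) - S n`. -/
noncomputable def chebS' : ℕ → Polynomial ℤ
  | 0 => 1
  | 1 => X
  | (n + 2) => X * chebS' (n + 1) - chebS' n

/-- Chebyshev polynomials of the first kind (nonnegative index):
`T 0 = 2`, `T 1 = X`, `T (n+2) = X * T (n+1) - T n`. -/
noncomputable def chebT' : ℕ → Polynomial ℤ
  | 0 => 2
  | 1 => X
  | (n + 2) => X * chebT' (n + 1) - chebT' n

/-- Chebyshev polynomials of the second kind extended to all integer indices,
characterized by `S n (u + u⁻¹) = (u^(n+1) - u^(-n-1))/(u - u⁻¹)`. -/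
noncomputable def chebS (n : ℤ) : Polynomial ℤ :=
  if 0 ≤ n then chebS' n.toNat else if n = -1 then 0 else - chebS' (-n - 2).toNat

/-- Chebyshev polynomials of the first kind extended to all integer indices,
characterized by `T n (u + u⁻¹) = u^n + u^(-n)`. -/
noncomputable def chebT (n : ℤ) : Polynomial ℤ :=
  if 0 ≤ n then chebT' n.toNat else chebT' (-n).toNat

/-- The ground ring `R̂ = ℤ[q^{±1}][x₁,x₂]`. -/
noncomputable abbrev Rhat : Type := MvPolynomial (Fin 2) (LaurentPolynomial ℤ)

/-- `{m} = q^(2m) - q^(-2m)` in `ℤ[q^{±1}]`. -/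
noncomputable def brk (m : ℤ) : LaurentPolynomial ℤ :=
  LaurentPolynomial.T (2 * m) - LaurentPolynomial.T (-(2 * m))

/-- `{m}` viewed in `R̂`. -/
noncomputable def brkR (m : ℤ) : Rhat := algebraMap (LaurentPolynomial ℤ) Rhat (brk m)

/-- `S_k(y)` as an element of `R̂[y]`. -/
noncomputable def Spoly (k : ℤ) : Polynomial Rhat := (chebS k).map (Int.castRingHom Rhat)

/-- `S_k(xᵢ)` as an element of `R̂`. -/
noncomputable def Sx (i : Fin 2) (k : ℤ) : Rhat := Polynomial.aeval (MvPolynomial.X i) (chebS k)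

/-- `G_k = {k+1}·S_k(y) + (-1)^(k+1)·{1}·S_k(x₁)·S_k(x₂)` in `R̂[y]`. -/
noncomputable def Gpoly (k : ℤ) : Polynomial Rhat :=
  Polynomial.C (brkR (k + 1)) * Spoly k +
    Polynomial.C (((Int.negOnePow (k + 1) : ℤ) : Rhat) * brkR 1 * Sx 0 k * Sx 1 k)

-- cancellation
lemma laurent_two_smul (x y : LaurentPolynomial ℤ) (h : 2 • x = 2 • y) : x = y := by
  ext n
  have h2 : (x + x).coeff n = (y + y).coeff n := by
    rw [← two_smul ℕ, ← two_smul ℕ, h]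
  change (x.coeff + x.coeff) n = (y.coeff + y.coeff) n at h2
  rw [Finsupp.add_apply, Finsupp.add_apply] at h2
  omega

lemma rhat_two_smul (x y : Rhat) (h : 2 • x = 2 • y) : x = y := by
  refine MvPolynomial.ext _ _ (fun m => ?_)
  apply laurent_two_smul
  have := congrArg (MvPolynomial.coeff m) h
  rwa [MvPolynomial.coeff_smul, MvPolynomial.coeff_smul] at this

lemma poly_two_smul (x y : Polynomial Rhat) (h : 2 • x = 2 • y) : x = y := by
  refine Polynomial.ext (fun n => ?_)
  apply rhat_two_smul
  have := congrArg (fun p => Polynomial.coeff p n) h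
  rwa [Polynomial.coeff_smul, Polynomial.coeff_smul] at this

-- symmetry lemmas
lemma chebS_neg (j : ℤ) : chebS (-j - 2) = - chebS j := by
  unfold chebS
  by_cases h0 : 0 ≤ j
  · rw [if_neg (by omega), if_neg (by omega), if_pos h0]
    have e : -(-j - 2) - 2 = j := by ring
    rw [e]
  · by_cases h1 : j = -1
    · subst h1; norm_num
    · rw [if_pos (by omega), if_neg h0, if_neg h1, neg_neg]

lemma brk_neg (m : ℤ) : brk (-m) = - brk m := by
  unfold brk
  rw [show 2 * -m = -(2 * m) by ring, neg_neg]
  ring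

lemma brkR_neg (m : ℤ) : brkR (-m) = - brkR m := by
  unfold brkR; rw [brk_neg, map_neg (algebraMap (LaurentPolynomial ℤ) Rhat)]

lemma Spoly_symm (j : ℤ) : Spoly (-j - 2) = - Spoly j := by
  unfold Spoly; rw [chebS_neg, Polynomial.map_neg]

lemma Sx_symm (i : Fin 2) (j : ℤ) : Sx i (-j - 2) = - Sx i j := by
  unfold Sx; rw [chebS_neg, map_neg (Polynomial.aeval (R := ℤ) (MvPolynomial.X i : Rhat))]

lemma Gpoly_symm (j : ℤ) : Gpoly (-j - 2) = Gpoly j := by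
  unfold Gpoly
  rw [show -j - 2 + 1 = -(j + 1) by ring, Spoly_symm, Sx_symm, Sx_symm, brkR_neg,
    Int.negOnePow_neg, Polynomial.C_neg,
    show (((Int.negOnePow (j + 1) : ℤ) : Rhat) * brkR 1 * -Sx 0 j * -Sx 1 j)
      = ((Int.negOnePow (j + 1) : ℤ) : Rhat) * brkR 1 * Sx 0 j * Sx 1 j from by ring]
  ring

lemma chebS_zero : chebS 0 = 1 := by simp [chebS, chebS']

lemma chebS_neg_one : chebS (-1) = 0 := by simp [chebS]

lemma brk_zero : brk 0 = 0 := by simp [brk]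

lemma Gpoly_zero : Gpoly 0 = 0 := by
  unfold Gpoly Spoly Sx
  rw [zero_add, chebS_zero, Polynomial.map_one, Int.negOnePow_one]
  simp only [Polynomial.aeval_one, Units.val_neg, Units.val_one, Int.cast_neg, Int.cast_one,
    neg_mul, one_mul, mul_one]
  rw [← Polynomial.C_add, show brkR 1 + -1 * brkR 1 = 0 from by ring, Polynomial.C_0]

lemma Gpoly_neg_one : Gpoly (-1) = 0 := by
  unfold Gpoly Spoly Sx
  rw [chebS_neg_one]
  simp [brkR, brk_zero]

-- degree lemmas
lemma chebS'_degree_le (n : ℕ) : (chebS' n).degree ≤ n := by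
  induction n using Nat.strong_induction_on with
  | _ n ih =>
    match n with
    | 0 => simp [chebS']
    | 1 => simpa [chebS'] using degree_X_le
    | (n + 2) =>
      rw [chebS']
      refine le_trans (degree_sub_le _ _) (max_le ?_ ?_)
      · refine le_trans (degree_mul_le _ _) ?_
        refine le_trans (add_le_add degree_X_le (ih (n + 1) (by omega))) ?_
        rw [show ((n + 2 : ℕ) : WithBot ℕ) = 1 + ((n + 1 : ℕ) : WithBot ℕ) by push_cast; ring]
      · refine le_trans (ih n (by omega)) ?_
        exact_mod_cast Nat.le_add_right n 2

lemma Spoly_degree_le (k : ℕ) : (Spoly (k : ℤ)).degree ≤ k := by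
  refine le_trans (degree_map_le) ?_
  rw [chebS, if_pos (by positivity), Int.toNat_natCast]
  exact chebS'_degree_le k

lemma Gpoly_degree_le (k N : ℕ) (h : k ≤ N) : (Gpoly (k : ℤ)).degree ≤ N := by
  unfold Gpoly
  refine le_trans (degree_add_le _ _) (max_le ?_ ?_)
  · refine le_trans (degree_mul_le _ _) ?_
    refine le_trans (add_le_add degree_C_le (Spoly_degree_le k)) ?_
    rw [zero_add]
    exact_mod_cast Nat.cast_le.mpr h
  · exact le_trans degree_C_le (by exact_mod_cast Nat.cast_le.mpr (Nat.zero_le N))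

set_option maxHeartbeats 2000000 in
/-- with `Q_m = (1/2)·∑_{k=0}^m G_{m-2k-1}` (and `Q_m = 0` for `m < 0`)
and `U_n = G_n + x₁x₂·G_{n-1} - G_{n-2} + (x₁²+x₂²)·Q_{n-1} + 2x₁x₂·Q_{n-2}`, one has
`deg_y (U_n - G_n) ≤ n - 1` for all `n ≥ 1`; consequently the `R̂`-span of
`{U_n : n ≥ 1}` equals the `R̂`-span of `{G_n : n ≥ 1}`. -/
theorem U_span_eq_G_span (Q : ℤ → Polynomial Rhat)
    (hQ : ∀ m : ℤ, 0 ≤ m →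
      2 • Q m = ∑ k ∈ Finset.range (m.toNat + 1), Gpoly (m - 2 * (k : ℤ) - 1))
    (hQneg : ∀ m : ℤ, m < 0 → Q m = 0)
    (U : ℤ → Polynomial Rhat)
    (hU : ∀ n : ℤ, U n = Gpoly n
      + Polynomial.C (MvPolynomial.X 0 * MvPolynomial.X 1) * Gpoly (n - 1)
      - Gpoly (n - 2)
      + Polynomial.C ((MvPolynomial.X 0) ^ 2 + (MvPolynomial.X 1) ^ 2) * Q (n - 1)
      + Polynomial.C (2 * (MvPolynomial.X 0 * MvPolynomial.X 1)) * Q (n - 2)) :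
    (∀ n : ℕ, 1 ≤ n → (U n - Gpoly n).degree ≤ ((n - 1 : ℕ) : ℕ)) ∧
    Submodule.span Rhat (Set.range (fun n : ℕ+ => U (n : ℕ))) =
      Submodule.span Rhat (Set.range (fun n : ℕ+ => Gpoly (n : ℕ))) := by
  -- `Q 0 = 0`
  have hQ0 : Q 0 = 0 := by
    have h := hQ 0 le_rfl
    rw [show (0:ℤ).toNat + 1 = 1 from rfl, Finset.sum_range_one,
      show (0:ℤ) - 2 * ((0:ℕ):ℤ) - 1 = -1 from by norm_num, Gpoly_neg_one] at h
    exact poly_two_smul _ _ (by rw [h, smul_zero])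
  -- recurrence `Q m = Q (m-2) + G (m-1)` for `m ≥ 1`
  have hrec : ∀ m : ℤ, 1 ≤ m → Q m = Q (m - 2) + Gpoly (m - 1) := by
    intro m hm
    apply poly_two_smul
    rw [smul_add]
    rcases eq_or_lt_of_le hm with h1 | h2
    · have hm1 : m = 1 := h1.symm
      subst hm1
      rw [hQ 1 (by norm_num), show (1:ℤ) - 2 = -1 from by norm_num, hQneg (-1) (by norm_num)]
      have hG2 : Gpoly (-2 : ℤ) = Gpoly 0 := by
        have := Gpoly_symm 0
        norm_num at this
        exact this
      rw [show (1:ℤ).toNat + 1 = 2 from rfl, Finset.sum_range_succ, Finset.sum_range_one,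
        show (1:ℤ) - 2 * ((0:ℕ):ℤ) - 1 = 0 from by norm_num,
        show (1:ℤ) - 2 * ((1:ℕ):ℤ) - 1 = -2 from by norm_num,
        hG2, Gpoly_zero, show (1:ℤ) - 1 = 0 from by norm_num, Gpoly_zero]
      simp
    · have h0 : (0:ℤ) ≤ m := by omega
      have h2' : (0:ℤ) ≤ m - 2 := by omega
      rw [hQ m h0, hQ (m - 2) h2']
      have ht : m.toNat + 1 = ((m - 2).toNat + 2) + 1 := by omega
      rw [ht, Finset.sum_range_succ', Finset.sum_range_succ]
      have e0 : m - 2 * (((0:ℕ)):ℤ) - 1 = m - 1 := by norm_num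
      have elast : m - 2 * ((((m - 2).toNat + 1 : ℕ) + 1 : ℕ) : ℤ) - 1 = -(m-1) - 2 := by
        have : ((m - 2).toNat : ℤ) = m - 2 := Int.toNat_of_nonneg h2'
        push_cast
        rw [this]
        ring
      have emid : (∑ k ∈ Finset.range ((m - 2).toNat + 1),
            Gpoly (m - 2 * (((k + 1 : ℕ)) : ℤ) - 1))
          = ∑ k ∈ Finset.range ((m - 2).toNat + 1), Gpoly (m - 2 - 2 * (k : ℤ) - 1) := by
        refine Finset.sum_congr rfl fun k _ => ?_
        congr 1
        push_cast
        ring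
      rw [elast, Gpoly_symm (m - 1), e0, emid, two_smul]
      ring
  -- `Q 1 = 0`
  have hQ1 : Q 1 = 0 := by
    have h := hrec 1 le_rfl
    rw [show (1:ℤ) - 2 = -1 from by norm_num, show (1:ℤ) - 1 = 0 from by norm_num,
      hQneg (-1) (by norm_num), Gpoly_zero, add_zero] at h
    exact h
  -- degree bound for Q
  have hQd : ∀ m : ℕ, (Q (m : ℤ)).degree ≤ (m : WithBot ℕ) := by
    intro m
    induction m using Nat.strong_induction_on with
    | _ m ih =>
      match m with
      | 0 => rw [Nat.cast_zero, hQ0, Polynomial.degree_zero]; exact bot_le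
      | 1 => rw [Nat.cast_one, hQ1, Polynomial.degree_zero]; exact bot_le
      | (k + 2) =>
        have h := hrec ((k : ℤ) + 2) (by omega)
        rw [show (((k + 2 : ℕ)) : ℤ) = (k : ℤ) + 2 from by push_cast; ring, h]
        refine le_trans (Polynomial.degree_add_le _ _) (max_le ?_ ?_)
        · rw [show (k : ℤ) + 2 - 2 = ((k : ℕ) : ℤ) from by push_cast; ring]
          exact (ih k (by omega)).trans (by exact_mod_cast Nat.le_add_right k 2)
        · rw [show (k : ℤ) + 2 - 1 = (((k + 1 : ℕ)) : ℤ) from by push_cast; ring]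
          exact_mod_cast Gpoly_degree_le (k + 1) (k + 2) (by omega)
  -- part 1 : the degree bound
  have part1 : ∀ n : ℕ, 1 ≤ n → (U (n : ℤ) - Gpoly (n : ℤ)).degree ≤ ((n - 1 : ℕ) : ℕ) := by
    intro n hn
    have e : U (n : ℤ) - Gpoly (n : ℤ) =
        Polynomial.C (MvPolynomial.X 0 * MvPolynomial.X 1) * Gpoly ((n : ℤ) - 1)
        - Gpoly ((n : ℤ) - 2)
        + Polynomial.C ((MvPolynomial.X 0) ^ 2 + (MvPolynomial.X 1) ^ 2) * Q ((n : ℤ) - 1)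
        + Polynomial.C (2 * (MvPolynomial.X 0 * MvPolynomial.X 1)) * Q ((n : ℤ) - 2) := by
      rw [hU]; ring
    rw [e]
    have b1 : (Polynomial.C (MvPolynomial.X 0 * MvPolynomial.X 1) *
        Gpoly ((n : ℤ) - 1)).degree ≤ ((n - 1 : ℕ) : WithBot ℕ) := by
      refine le_trans (Polynomial.degree_mul_le _ _) ?_
      calc Polynomial.degree _ + Polynomial.degree _ ≤ 0 + ((n - 1 : ℕ) : WithBot ℕ) := by
            refine add_le_add Polynomial.degree_C_le ?_
            rw [show (n : ℤ) - 1 = ((n - 1 : ℕ) : ℤ) from by omega]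
            exact Gpoly_degree_le (n - 1) (n - 1) le_rfl
        _ = ((n - 1 : ℕ) : WithBot ℕ) := zero_add _
    have b2 : (Gpoly ((n : ℤ) - 2)).degree ≤ ((n - 1 : ℕ) : WithBot ℕ) := by
      rcases Nat.lt_or_ge n 2 with h | h
      · have : n = 1 := by omega
        subst this
        rw [show ((1 : ℕ) : ℤ) - 2 = -1 from by norm_num, Gpoly_neg_one,
          Polynomial.degree_zero]
        exact bot_le
      · rw [show (n : ℤ) - 2 = ((n - 2 : ℕ) : ℤ) from by omega]
        exact Gpoly_degree_le (n - 2) (n - 1) (Nat.sub_le_sub_left (by norm_num) n)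
    have b3 : (Polynomial.C ((MvPolynomial.X 0) ^ 2 + (MvPolynomial.X 1) ^ 2) *
        Q ((n : ℤ) - 1)).degree ≤ ((n - 1 : ℕ) : WithBot ℕ) := by
      refine le_trans (Polynomial.degree_mul_le _ _) ?_
      calc Polynomial.degree _ + Polynomial.degree _ ≤ 0 + ((n - 1 : ℕ) : WithBot ℕ) := by
            refine add_le_add Polynomial.degree_C_le ?_
            rw [show (n : ℤ) - 1 = ((n - 1 : ℕ) : ℤ) from by omega]
            exact hQd (n - 1)
        _ = ((n - 1 : ℕ) : WithBot ℕ) := zero_add _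
    have b4 : (Polynomial.C (2 * (MvPolynomial.X 0 * MvPolynomial.X 1)) *
        Q ((n : ℤ) - 2)).degree ≤ ((n - 1 : ℕ) : WithBot ℕ) := by
      rcases Nat.lt_or_ge n 2 with h | h
      · have : n = 1 := by omega
        subst this
        rw [show ((1 : ℕ) : ℤ) - 2 = -1 from by norm_num, hQneg (-1) (by norm_num),
          mul_zero, Polynomial.degree_zero]
        exact bot_le
      · refine le_trans (Polynomial.degree_mul_le _ _) ?_
        calc Polynomial.degree _ + Polynomial.degree _ ≤ 0 + ((n - 2 : ℕ) : WithBot ℕ) := by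
              refine add_le_add Polynomial.degree_C_le ?_
              rw [show (n : ℤ) - 2 = ((n - 2 : ℕ) : ℤ) from by omega]
              exact hQd (n - 2)
          _ = ((n - 2 : ℕ) : WithBot ℕ) := zero_add _
          _ ≤ ((n - 1 : ℕ) : WithBot ℕ) :=
            Nat.cast_le.mpr (Nat.sub_le_sub_left (by norm_num) n)
    exact le_trans (Polynomial.degree_add_le _ _) (max_le
      (le_trans (Polynomial.degree_add_le _ _) (max_le
        (le_trans (Polynomial.degree_sub_le _ _) (max_le b1 b2)) b3)) b4)
  refine ⟨part1, ?_⟩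
  -- the span part
  set SU := Submodule.span Rhat (Set.range (fun n : ℕ+ => U ((n : ℕ) : ℤ))) with hSUdef
  set SG := Submodule.span Rhat (Set.range (fun n : ℕ+ => Gpoly ((n : ℕ) : ℤ))) with hSGdef
  have hGmemG : ∀ n : ℕ, Gpoly (n : ℤ) ∈ SG := by
    intro n
    match n with
    | 0 => rw [Nat.cast_zero, Gpoly_zero]; exact zero_mem _
    | (k + 1) => exact Submodule.subset_span ⟨⟨k + 1, Nat.succ_pos k⟩, rfl⟩
  have hGZG : ∀ j : ℤ, -1 ≤ j → Gpoly j ∈ SG := by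
    intro j hj
    rcases eq_or_lt_of_le hj with h | h
    · rw [← h, Gpoly_neg_one]; exact zero_mem _
    · rw [show j = ((j.toNat : ℕ) : ℤ) from by omega]
      exact hGmemG j.toNat
  have hQmemG : ∀ n : ℕ, Q (n : ℤ) ∈ SG := by
    intro n
    induction n using Nat.strong_induction_on with
    | _ n ih =>
      match n with
      | 0 => rw [Nat.cast_zero, hQ0]; exact zero_mem _
      | 1 => rw [Nat.cast_one, hQ1]; exact zero_mem _
      | (k + 2) =>
        have h := hrec ((k : ℤ) + 2) (by omega)
        rw [show (((k + 2 : ℕ)) : ℤ) = (k : ℤ) + 2 from by push_cast; ring, h,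
          show (k : ℤ) + 2 - 2 = ((k : ℕ) : ℤ) from by push_cast; ring,
          show (k : ℤ) + 2 - 1 = (((k + 1 : ℕ)) : ℤ) from by push_cast; ring]
        exact Submodule.add_mem _ (ih k (by omega)) (hGmemG (k + 1))
  have hQZG : ∀ j : ℤ, -1 ≤ j → Q j ∈ SG := by
    intro j hj
    rcases eq_or_lt_of_le hj with h | h
    · rw [← h, hQneg (-1) (by norm_num)]; exact zero_mem _
    · rw [show j = ((j.toNat : ℕ) : ℤ) from by omega]
      exact hQmemG j.toNat
  have hSUle : SU ≤ SG := by
    rw [hSUdef]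
    refine Submodule.span_le.mpr ?_
    rintro _ ⟨p, rfl⟩
    have hp : 1 ≤ (p : ℕ) := p.one_le
    have goal : U (((p : ℕ)) : ℤ) ∈ SG := by
      rw [hU (((p : ℕ)) : ℤ)]
      have m1 : Gpoly (((p : ℕ)) : ℤ) ∈ SG := hGmemG p
      have m2 : Polynomial.C (MvPolynomial.X 0 * MvPolynomial.X 1)
          * Gpoly ((((p : ℕ)) : ℤ) - 1) ∈ SG := by
        rw [← Polynomial.smul_eq_C_mul]
        exact SG.smul_mem _ (hGZG _ (by omega))
      have m3 : Gpoly ((((p : ℕ)) : ℤ) - 2) ∈ SG := hGZG _ (by omega)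
      have m4 : Polynomial.C ((MvPolynomial.X 0) ^ 2 + (MvPolynomial.X 1) ^ 2)
          * Q ((((p : ℕ)) : ℤ) - 1) ∈ SG := by
        rw [← Polynomial.smul_eq_C_mul]
        exact SG.smul_mem _ (hQZG _ (by omega))
      have m5 : Polynomial.C (2 * (MvPolynomial.X 0 * MvPolynomial.X 1))
          * Q ((((p : ℕ)) : ℤ) - 2) ∈ SG := by
        rw [← Polynomial.smul_eq_C_mul]
        exact SG.smul_mem _ (hQZG _ (by omega))
      exact SG.add_mem (SG.add_mem (Submodule.sub_mem (R := Rhat) (M := Rhat[X]) SG (SG.add_mem m1 m2) m3) m4) m5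
    exact goal
  have main : ∀ n : ℕ, Gpoly (n : ℤ) ∈ SU ∧ Q (n : ℤ) ∈ SU := by
    intro n
    induction n using Nat.strong_induction_on with
    | _ n ih =>
      have hQpart : ∀ m : ℕ, m < n + 1 → Q (m : ℤ) ∈ SU := by
        intro m hm
        match m with
        | 0 => rw [Nat.cast_zero, hQ0]; exact zero_mem _
        | 1 => rw [Nat.cast_one, hQ1]; exact zero_mem _
        | (k + 2) =>
          have h := hrec ((k : ℤ) + 2) (by omega)
          rw [show (((k + 2 : ℕ)) : ℤ) = (k : ℤ) + 2 from by push_cast; ring, h,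
            show (k : ℤ) + 2 - 2 = ((k : ℕ) : ℤ) from by push_cast; ring,
            show (k : ℤ) + 2 - 1 = (((k + 1 : ℕ)) : ℤ) from by push_cast; ring]
          exact Submodule.add_mem _ (ih k (by omega)).2 (ih (k + 1) (by omega)).1
      refine ⟨?_, hQpart n (by omega)⟩
      match n, ih, hQpart with
      | 0, _, _ => rw [Nat.cast_zero, Gpoly_zero]; exact zero_mem _
      | (k + 1), ih, hQpart =>
        have e : Gpoly (((k + 1 : ℕ)) : ℤ) = U (((k + 1 : ℕ)) : ℤ)
            - Polynomial.C (MvPolynomial.X 0 * MvPolynomial.X 1) * Gpoly ((((k + 1 : ℕ)) : ℤ) - 1)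
            + Gpoly ((((k + 1 : ℕ)) : ℤ) - 2)
            - Polynomial.C ((MvPolynomial.X 0) ^ 2 + (MvPolynomial.X 1) ^ 2)
                * Q ((((k + 1 : ℕ)) : ℤ) - 1)
            - Polynomial.C (2 * (MvPolynomial.X 0 * MvPolynomial.X 1))
                * Q ((((k + 1 : ℕ)) : ℤ) - 2) := by
          rw [hU]; ring
        have hUmem : U (((k + 1 : ℕ)) : ℤ) ∈ SU :=
          Submodule.subset_span ⟨⟨k + 1, Nat.succ_pos k⟩, rfl⟩
        have hGm1 : Polynomial.C (MvPolynomial.X 0 * MvPolynomial.X 1)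
            * Gpoly ((((k + 1 : ℕ)) : ℤ) - 1) ∈ SU := by
          rw [← Polynomial.smul_eq_C_mul]
          refine SU.smul_mem _ ?_
          rw [show (((k + 1 : ℕ)) : ℤ) - 1 = ((k : ℕ) : ℤ) from by push_cast; ring]
          exact (ih k (by omega)).1
        have hGm2 : Gpoly ((((k + 1 : ℕ)) : ℤ) - 2) ∈ SU := by
          clear e hUmem hGm1
          match k with
          | 0 => rw [show (((0 + 1 : ℕ)) : ℤ) - 2 = -1 from by norm_num, Gpoly_neg_one]
                 exact zero_mem _
          | (j + 1) =>
            rw [show (((j + 1 + 1 : ℕ)) : ℤ) - 2 = ((j : ℕ) : ℤ) from by push_cast; ring]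
            exact (ih j (by omega)).1
        have hQm1 : Polynomial.C ((MvPolynomial.X 0) ^ 2 + (MvPolynomial.X 1) ^ 2)
            * Q ((((k + 1 : ℕ)) : ℤ) - 1) ∈ SU := by
          rw [← Polynomial.smul_eq_C_mul]
          refine SU.smul_mem _ ?_
          rw [show (((k + 1 : ℕ)) : ℤ) - 1 = ((k : ℕ) : ℤ) from by push_cast; ring]
          exact hQpart k (by omega)
        have hQm2 : Polynomial.C (2 * (MvPolynomial.X 0 * MvPolynomial.X 1))
            * Q ((((k + 1 : ℕ)) : ℤ) - 2) ∈ SU := by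
          rw [← Polynomial.smul_eq_C_mul]
          refine SU.smul_mem _ ?_
          clear e hUmem hGm1 hGm2 hQm1
          match k with
          | 0 => rw [show (((0 + 1 : ℕ)) : ℤ) - 2 = -1 from by norm_num,
                   hQneg (-1) (by norm_num)]
                 exact zero_mem _
          | (j + 1) =>
            rw [show (((j + 1 + 1 : ℕ)) : ℤ) - 2 = ((j : ℕ) : ℤ) from by push_cast; ring]
            exact hQpart j (by omega)
        rw [e]
        exact Submodule.sub_mem (R := Rhat) (M := Rhat[X]) SU (Submodule.sub_mem (R := Rhat) (M := Rhat[X]) SU (SU.add_mem (Submodule.sub_mem (R := Rhat) (M := Rhat[X]) SU hUmem hGm1) hGm2) hQm1) hQm2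
  have hSGle : SG ≤ SU := by
    rw [hSGdef]
    refine Submodule.span_le.mpr ?_
    rintro _ ⟨p, rfl⟩
    have goal : Gpoly (((p : ℕ)) : ℤ) ∈ SU := (main (p : ℕ)).1
    exact goal
  exact le_antisymm hSUle hSGle
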